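/- For a discrete random variable Y taking values in a finite set 𝒴 and an estimator Ŷ with error probability ε = P(Ŷ ≠ Y), the conditional entropy satisfies H(Y|Ŷ) ≤ h_b(ε) + ε·log(|𝒴| − 1), where h_b is the binary entropy function (Fano's inequality). -/

import Mathlib

open Real Finset
open scoped Classical

noncomputable section

/-- Probability of an event under a pmf `p` on a finite sample space. -/
def prob {Ω : Type*} [Fintype Ω] (p : Ω → ℝ) (A : Ω → Prop) : ℝ :=
  ∑ ω ∈ Finset.univ.filter (fun ω => A ω), p ω

/-- Pushforward distribution of a random variable `X` under pmf `p`. -/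
def dist' {Ω α : Type*} [Fintype Ω] (p : Ω → ℝ) (X : Ω → α) : α → ℝ :=
  fun a => ∑ ω ∈ Finset.univ.filter (fun ω => X ω = a), p ω

/-- Shannon entropy of a pmf on a finite alphabet (with `0 log 0 = 0`). -/
def entFun {α : Type*} [Fintype α] (q : α → ℝ) : ℝ := -∑ a, q a * Real.log (q a)

/-- Entropy `H(X)` of a random variable. -/
def ent {Ω α : Type*} [Fintype Ω] [Fintype α] (p : Ω → ℝ) (X : Ω → α) : ℝ :=
  entFun (dist' p X)

/-- Conditional entropy `H(X | Z) = H(X, Z) - H(Z)`. -/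
def condEnt {Ω α β : Type*} [Fintype Ω] [Fintype α] [Fintype β]
    (p : Ω → ℝ) (X : Ω → α) (Z : Ω → β) : ℝ :=
  ent p (fun ω => (X ω, Z ω)) - ent p Z

/-- Mutual information `I(X; Z) = H(X) - H(X | Z)`. -/
def mutInf {Ω α β : Type*} [Fintype Ω] [Fintype α] [Fintype β]
    (p : Ω → ℝ) (X : Ω → α) (Z : Ω → β) : ℝ :=
  ent p X - condEnt p X Z

/-- Conditional mutual information `I(X; Z | W) = H(X | W) - H(X | Z, W)`. -/
def condMI {Ω α β γ : Type*} [Fintype Ω] [Fintype α] [Fintype β] [Fintype γ]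
    (p : Ω → ℝ) (X : Ω → α) (Z : Ω → β) (W : Ω → γ) : ℝ :=
  condEnt p X W - condEnt p X (fun ω => (Z ω, W ω))

/-- `p` is a probability mass function. -/
def IsPMF {Ω : Type*} [Fintype Ω] (p : Ω → ℝ) : Prop :=
  (∀ ω, 0 ≤ p ω) ∧ ∑ ω, p ω = 1

/-- Binary entropy function (with the convention `0 log 0 = 0`). -/
def binEnt (x : ℝ) : ℝ := -x * Real.log x - (1 - x) * Real.log (1 - x)


/-! Write `r` for the joint law of `(Y, Ŷ)` and `s` for the law of `Ŷ`, so that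
`H(Y | Ŷ) = ∑ r log (s / r)`. Gibbs' inequality against `s(ŷ) q(y | ŷ)`, for any conditional law
`q` whose support contains that of `r`, gives `H(Y | Ŷ) ≤ -∑ r log q`. For the choice
`q(y | ŷ) = 1 - ε` if `y = ŷ` and `ε / (|𝒴| - 1)` otherwise, the right-hand side only sees the
masses `1 - ε` and `ε` that `r` puts on and off the diagonal, and equals
`h_b(ε) + ε log (|𝒴| - 1)`. -/

theorem mul_log_sub_log_le_sub {r w : ℝ} (hr : 0 ≤ r) (hw : 0 ≤ w) (hsupp : 0 < r → 0 < w) :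
    r * (log w - log r) ≤ w - r := by
  rcases hr.eq_or_lt with rfl | hr
  · simpa using hw
  have hw := hsupp hr
  calc r * (log w - log r) = r * log (w / r) := by rw [log_div hw.ne' hr.ne']
    _ ≤ r * (w / r - 1) := by gcongr; exact log_le_sub_one_of_pos (by positivity)
    _ = w - r := by field_simp

theorem sum_mul_log_le_sum_mul_log_self {ι : Type*} [Fintype ι] {r w : ι → ℝ}
    (hr : ∀ i, 0 ≤ r i) (hw : ∀ i, 0 ≤ w i) (hsupp : ∀ i, 0 < r i → 0 < w i)
    (hsum : ∑ i, w i ≤ ∑ i, r i) :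
    ∑ i, r i * log (w i) ≤ ∑ i, r i * log (r i) := by
  have := Finset.sum_le_sum fun i (_ : i ∈ univ) =>
    mul_log_sub_log_le_sub (hr i) (hw i) (hsupp i)
  simp only [mul_sub, Finset.sum_sub_distrib] at this
  linarith

section Distribution

variable {Ω α β : Type*} [Fintype Ω] (p : Ω → ℝ)

theorem dist'_nonneg (hp : ∀ ω, 0 ≤ p ω) (X : Ω → α) (a : α) : 0 ≤ dist' p X a :=
  Finset.sum_nonneg fun ω _ => hp ω

theorem sum_dist'_eq_prob (X : Ω → α) (t : Finset α) :
    ∑ a ∈ t, dist' p X a = prob p (fun ω => X ω ∈ t) := by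
  unfold dist' prob
  convert Finset.sum_fiberwise_eq_sum_filter univ t X p

theorem sum_dist' [Fintype α] (X : Ω → α) : ∑ a, dist' p X a = ∑ ω, p ω := by
  simpa [prob] using sum_dist'_eq_prob p X univ

theorem sum_dist'_pair [Fintype α] (X : Ω → α) (Z : Ω → β) (b : β) :
    ∑ a, dist' p (fun ω => (X ω, Z ω)) (a, b) = dist' p Z b := by
  rw [dist', ← Finset.sum_fiberwise (univ.filter fun ω => Z ω = b) X p]
  simp only [dist', Finset.filter_filter, Prod.ext_iff, and_comm]

theorem dist'_pair_le [Fintype α] (hp : ∀ ω, 0 ≤ p ω) (X : Ω → α) (Z : Ω → β) (a : α) (b : β) :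
    dist' p (fun ω => (X ω, Z ω)) (a, b) ≤ dist' p Z b := by
  rw [← sum_dist'_pair p X Z b]
  exact Finset.single_le_sum (fun a _ => dist'_nonneg p hp _ (a, b)) (mem_univ a)

theorem condEnt_eq_sum_mul_log_sub_log [Fintype α] [Fintype β] (X : Ω → α) (Z : Ω → β) :
    condEnt p X Z = ∑ c, dist' p (fun ω => (X ω, Z ω)) c *
      (log (dist' p Z c.2) - log (dist' p (fun ω => (X ω, Z ω)) c)) := by
  have hmarg : ∑ b, dist' p Z b * log (dist' p Z b) =
      ∑ c : α × β, dist' p (fun ω => (X ω, Z ω)) c * log (dist' p Z c.2) := by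
    rw [Fintype.sum_prod_type_right]
    refine Finset.sum_congr rfl fun b _ => ?_
    simp only [← Finset.sum_mul, sum_dist'_pair]
  rw [condEnt, ent, ent, entFun, entFun, hmarg]
  simp only [mul_sub, Finset.sum_sub_distrib]
  ring

theorem condEnt_le_neg_sum_mul_log [Fintype α] [Fintype β] (hp : ∀ ω, 0 ≤ p ω)
    (X : Ω → α) (Z : Ω → β) (q : α × β → ℝ) (hq : ∀ c, 0 ≤ q c) (hq1 : ∀ b, ∑ a, q (a, b) = 1)
    (hsupp : ∀ c, 0 < dist' p (fun ω => (X ω, Z ω)) c → 0 < q c) :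
    condEnt p X Z ≤ -∑ c, dist' p (fun ω => (X ω, Z ω)) c * log (q c) := by
  set r := dist' p (fun ω => (X ω, Z ω))
  set s := dist' p Z
  have hrs : ∀ c, r c ≤ s c.2 := fun c => dist'_pair_le p hp X Z c.1 c.2
  have hw : ∑ c : α × β, s c.2 * q c = ∑ c, r c := by
    rw [Fintype.sum_prod_type_right, sum_dist']
    simp_rw [← Finset.mul_sum, hq1, mul_one]
    exact sum_dist' p Z
  have gibbs := sum_mul_log_le_sum_mul_log_self (r := r) (w := fun c => s c.2 * q c)
    (dist'_nonneg p hp _)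
    (fun c => mul_nonneg (dist'_nonneg p hp _ c.2) (hq c))
    (fun c hc => mul_pos (hc.trans_le (hrs c)) (hsupp c hc)) hw.le
  have hlog : ∀ c, r c * log (s c.2 * q c) = r c * log (s c.2) + r c * log (q c) := fun c => by
    rcases (show 0 ≤ r c from dist'_nonneg p hp _ c).eq_or_lt with h | h
    · rw [← h]; ring
    · rw [log_mul (h.trans_le (hrs c)).ne' (hsupp c h).ne', mul_add]
  simp only [hlog, Finset.sum_add_distrib] at gibbs
  rw [condEnt_eq_sum_mul_log_sub_log]
  simp only [mul_sub, Finset.sum_sub_distrib]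
  linarith

end Distribution

def fanoKernel (α : Type*) [Fintype α] (ε : ℝ) (c : α × α) : ℝ :=
  if c.1 = c.2 then 1 - ε else ε / (Fintype.card α - 1)

section FanoKernel

variable {α : Type*} [Fintype α] {ε : ℝ}

theorem fanoKernel_nonneg (hε0 : 0 ≤ ε) (hε1 : ε ≤ 1) (c : α × α) : 0 ≤ fanoKernel α ε c := by
  have hcard : (1 : ℝ) ≤ Fintype.card α := by
    exact_mod_cast Fintype.card_pos_iff.mpr ⟨c.1⟩
  unfold fanoKernel
  split_ifs
  · linarith
  · exact div_nonneg hε0 (by linarith)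

theorem sum_fanoKernel (hcard : 2 ≤ Fintype.card α) (ε : ℝ) (b : α) :
    ∑ a, fanoKernel α ε (a, b) = 1 := by
  have hM : ((Fintype.card α - 1 : ℕ) : ℝ) = Fintype.card α - 1 := by
    rw [Nat.cast_sub (by omega), Nat.cast_one]
  have hM0 : (Fintype.card α : ℝ) - 1 ≠ 0 := by
    rw [← hM]; exact_mod_cast (by omega : Fintype.card α - 1 ≠ 0)
  rw [← Finset.add_sum_erase _ _ (mem_univ b)]
  simp only [fanoKernel, if_true]
  rw [Finset.sum_congr rfl fun a ha => if_neg (Finset.ne_of_mem_erase ha),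
    Finset.sum_const, Finset.card_erase_of_mem (mem_univ b), Finset.card_univ, nsmul_eq_mul, hM]
  field_simp
  ring

variable {r : α × α → ℝ}

theorem fanoKernel_pos_of_pos (hcard : 2 ≤ Fintype.card α) (hr : ∀ c, 0 ≤ r c)
    (hdiag : ∑ c ∈ univ.filter (fun c : α × α => c.1 = c.2), r c = 1 - ε)
    (hoff : ∑ c ∈ univ.filter (fun c : α × α => c.1 ≠ c.2), r c = ε)
    {c : α × α} (hc : 0 < r c) : 0 < fanoKernel α ε c := by
  have hM : (1 : ℝ) < Fintype.card α := by exact_mod_cast hcard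
  unfold fanoKernel
  split_ifs with h
  · have := hdiag ▸ Finset.single_le_sum (fun c _ => hr c) (mem_filter.2 ⟨mem_univ c, h⟩)
    linarith
  · have := hoff ▸ Finset.single_le_sum (fun c _ => hr c) (mem_filter.2 ⟨mem_univ c, h⟩)
    exact div_pos (hc.trans_le this) (by linarith)

theorem neg_sum_mul_log_fanoKernel (hcard : 2 ≤ Fintype.card α)
    (hdiag : ∑ c ∈ univ.filter (fun c : α × α => c.1 = c.2), r c = 1 - ε)
    (hoff : ∑ c ∈ univ.filter (fun c : α × α => c.1 ≠ c.2), r c = ε) :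
    -∑ c, r c * log (fanoKernel α ε c) = binEnt ε + ε * log (Fintype.card α - 1) := by
  have hM : (0 : ℝ) < Fintype.card α - 1 := by
    have : (2 : ℝ) ≤ Fintype.card α := by exact_mod_cast hcard
    linarith
  have hlog : ε * log (ε / (Fintype.card α - 1)) = ε * log ε - ε * log (Fintype.card α - 1) := by
    rcases eq_or_ne ε 0 with rfl | hε
    · simp
    · rw [log_div hε hM.ne', mul_sub]
  have hsplit := Finset.sum_filter_add_sum_filter_not univ (fun c : α × α => c.1 = c.2)
    fun c => r c * log (fanoKernel α ε c)
  simp only [← ne_eq] at hsplit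
  have hon : ∀ c ∈ univ.filter (fun c : α × α => c.1 = c.2),
      r c * log (fanoKernel α ε c) = r c * log (1 - ε) := fun c hc => by
    rw [fanoKernel, if_pos (mem_filter.1 hc).2]
  have hout : ∀ c ∈ univ.filter (fun c : α × α => c.1 ≠ c.2),
      r c * log (fanoKernel α ε c) = r c * log (ε / (Fintype.card α - 1)) := fun c hc => by
    rw [fanoKernel, if_neg (mem_filter.1 hc).2]
  rw [← hsplit, Finset.sum_congr rfl hon, Finset.sum_congr rfl hout, ← Finset.sum_mul,
    ← Finset.sum_mul, hdiag, hoff, hlog, binEnt]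
  ring

end FanoKernel

/-- **Fano's inequality.** -/
theorem fano_inequality {Ω 𝒴 : Type*} [Fintype Ω] [Fintype 𝒴]
    (p : Ω → ℝ) (hp : IsPMF p) (Y Yhat : Ω → 𝒴)
    (hcard : 2 ≤ Fintype.card 𝒴)
    (ε : ℝ) (hε : ε = prob p (fun ω => Yhat ω ≠ Y ω)) :
    condEnt p Y Yhat ≤ binEnt ε + ε * Real.log ((Fintype.card 𝒴 : ℝ) - 1) := by
  obtain ⟨hp0, hp1⟩ := hp
  set r := dist' p (fun ω => (Y ω, Yhat ω))
  have hr : ∀ c, 0 ≤ r c := dist'_nonneg p hp0 _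
  have hoff : ∑ c ∈ univ.filter (fun c : 𝒴 × 𝒴 => c.1 ≠ c.2), r c = ε := by
    rw [sum_dist'_eq_prob, hε]
    simp [prob, ne_comm]
  have hdiag : ∑ c ∈ univ.filter (fun c : 𝒴 × 𝒴 => c.1 = c.2), r c = 1 - ε := by
    have := Finset.sum_filter_add_sum_filter_not univ (fun c : 𝒴 × 𝒴 => c.1 = c.2) r
    rw [sum_dist', hp1] at this
    linarith
  have hε0 : 0 ≤ ε := hoff ▸ Finset.sum_nonneg fun c _ => hr c
  have hε1 : ε ≤ 1 := by linarith [hdiag ▸ Finset.sum_nonneg fun c _ => hr c]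
  calc condEnt p Y Yhat ≤ -∑ c, r c * log (fanoKernel 𝒴 ε c) :=
        condEnt_le_neg_sum_mul_log p hp0 Y Yhat _ (fanoKernel_nonneg hε0 hε1)
          (sum_fanoKernel hcard ε) fun c => fanoKernel_pos_of_pos hcard hr hdiag hoff
    _ = binEnt ε + ε * log (Fintype.card 𝒴 - 1) := neg_sum_mul_log_fanoKernel hcard hdiag hoff
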